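/- Define ū_min := (1/||B||)(2T̄(1−ρ)/(c(1−ρ^K)) + 2w̄ + T̄) and ū_max(ε) := ((1−ρ)ε − c w̄)/(c ||B||). Let ε_min := c(T̄ + 3w̄)/(1−ρ) + 2T̄/(1−ρ^K). Then for every ε ≥ ε_min, ū_min ≤ ū_max(ε), i.e., the feasibility interval [ū_min, ū_max(ε)] is nonempty. -/
import Mathlib


/-- Lemma 3: for every `ε ≥ ε_min`, the feasibility interval
`[ū_min, ū_max(ε)]` is nonempty, i.e. `ū_min ≤ ū_max(ε)`. -/
theorem stmt_9 (c ρ normB wbar Tbar ε : ℝ) (K : ℕ)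
    (hc : 0 < c) (hρ0 : 0 < ρ) (hρ1 : ρ < 1) (hK : 1 ≤ K)
    (hB : 0 < normB) (hw : 0 ≤ wbar) (hT : 0 < Tbar)
    (hε : c * (Tbar + 3 * wbar) / (1 - ρ) + 2 * Tbar / (1 - ρ ^ K) ≤ ε) :
    (1 / normB) * (2 * Tbar * (1 - ρ) / (c * (1 - ρ ^ K)) + 2 * wbar + Tbar)
      ≤ ((1 - ρ) * ε - c * wbar) / (c * normB) := by
  have h1 : 0 < 1 - ρ := by linarith
  have h2 : 0 < 1 - ρ ^ K := by
    have : ρ ^ K < 1 := pow_lt_one₀ hρ0.le hρ1 (by omega)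
    linarith
  have hε' : c * (Tbar + 3 * wbar) * (1 - ρ ^ K) + 2 * Tbar * (1 - ρ)
      ≤ ε * ((1 - ρ) * (1 - ρ ^ K)) := by
    have := mul_le_mul_of_nonneg_right hε (le_of_lt (mul_pos h1 h2))
    rw [add_mul, div_mul_eq_mul_div, div_mul_eq_mul_div] at this
    calc c * (Tbar + 3 * wbar) * (1 - ρ ^ K) + 2 * Tbar * (1 - ρ)
        = c * (Tbar + 3 * wbar) * ((1 - ρ) * (1 - ρ ^ K)) / (1 - ρ)
          + 2 * Tbar * ((1 - ρ) * (1 - ρ ^ K)) / (1 - ρ ^ K) := by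
          field_simp
      _ ≤ ε * ((1 - ρ) * (1 - ρ ^ K)) := this
  have hdiv : 2 * Tbar * (1 - ρ) / (1 - ρ ^ K) ≤ (1 - ρ) * ε - c * (Tbar + 3 * wbar) := by
    rw [div_le_iff₀ h2]
    nlinarith [hε']
  have key : 2 * Tbar * (1 - ρ) / (c * (1 - ρ ^ K)) + 2 * wbar + Tbar
      ≤ ((1 - ρ) * ε - c * wbar) / c := by
    rw [← sub_nonneg]
    have e : ((1 - ρ) * ε - c * wbar) / c
        - (2 * Tbar * (1 - ρ) / (c * (1 - ρ ^ K)) + 2 * wbar + Tbar)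
        = (((1 - ρ) * ε - c * (Tbar + 3 * wbar)) - 2 * Tbar * (1 - ρ) / (1 - ρ ^ K)) / c := by
      field_simp; ring
    rw [e]
    exact div_nonneg (by linarith [hdiv]) hc.le
  calc (1 / normB) * (2 * Tbar * (1 - ρ) / (c * (1 - ρ ^ K)) + 2 * wbar + Tbar)
      ≤ (1 / normB) * (((1 - ρ) * ε - c * wbar) / c) := by
        apply mul_le_mul_of_nonneg_left key (by positivity)
    _ = ((1 - ρ) * ε - c * wbar) / (c * normB) := by
        rw [mul_comm, div_mul_div_comm, mul_one]
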